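/- arXiv:1502.00837 — 2 statements merged into one kernel-verified Lean document; each statement's English description precedes it below -/
import Mathlib

section
/- Let ℓ be a positive integer and G a connected simple graph with at least (3^ℓ − 1)/2 vertices in which every vertex has degree at most 3. Then for every vertex v of G, there exists a path in G of length ℓ (i.e., with ℓ vertices) having v as an endpoint. -/
/-!
Breadth-first layers around `v` grow by a factor of at most 3, since every vertex at distance
`n + 1` is a neighbour of one at distance `n`. So if every vertex were within distance `ℓ - 2`
of `v`, there would be at most `1 + 3 + ⋯ + 3 ^ (ℓ - 2) = (3 ^ (ℓ - 1) - 1) / 2` vertices.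
Hence some `u` has `dist v u ≥ ℓ - 1`, and a shortest path from `v` to `u` starts with the
required path on `ℓ` vertices.
-/

open Finset

namespace SimpleGraph

variable {V : Type*} {G : SimpleGraph V}

lemma exists_adj_dist_eq_of_dist_eq_succ {v u : V} {n : ℕ} (h : G.dist u v = n + 1) :
    ∃ w, G.Adj u w ∧ G.dist w v = n := by
  have hreach : G.Reachable u v := Reachable.of_dist_ne_zero (by omega)
  obtain ⟨p, hp⟩ := hreach.exists_walk_length_eq_dist
  cases p with
  | nil => simp at h
  | @cons _ w _ hadj q =>
    have hq : G.dist w v ≤ n := by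
      have := dist_le q
      rw [Walk.length_cons, h] at hp
      omega
    have htri : G.dist u v ≤ G.dist u w + G.dist w v := hadj.reachable.dist_triangle_left v
    rw [dist_eq_one_iff_adj.mpr hadj] at htri
    exact ⟨w, hadj, by omega⟩

lemma Walk.IsPath.exists_injective_chain {u v : V} {p : G.Walk v u} (hp : p.IsPath) {ℓ : ℕ}
    (hℓ : 0 < ℓ) (hlen : ℓ ≤ p.length + 1) :
    ∃ f : Fin ℓ → V, Function.Injective f ∧ f ⟨0, hℓ⟩ = v ∧
      ∀ i : Fin ℓ, ∀ h : (i : ℕ) + 1 < ℓ, G.Adj (f i) (f ⟨i + 1, h⟩) := by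
  refine ⟨fun i ↦ p.getVert i, fun i j hij ↦ ?_, p.getVert_zero,
    fun i h ↦ p.adj_getVert_succ (by omega)⟩
  exact Fin.ext (hp.getVert_injOn (by simp; omega) (by simp; omega) hij)

variable [Fintype V] [DecidableRel G.Adj]

lemma card_filter_dist_eq_le_pow (hconn : G.Preconnected) {Δ : ℕ}
    (hdeg : ∀ w, G.degree w ≤ Δ) (v : V) (n : ℕ) :
    #{u | G.dist u v = n} ≤ Δ ^ n := by
  classical
  induction n with
  | zero =>
    calc #{u | G.dist u v = 0} ≤ #{v} :=
          card_le_card fun u hu ↦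
            mem_singleton.mpr ((hconn u v).dist_eq_zero_iff.mp (mem_filter.mp hu).2)
      _ = Δ ^ 0 := by simp
  | succ n ih =>
    have hsub : ({u | G.dist u v = n + 1} : Finset V) ⊆
        ({w | G.dist w v = n} : Finset V).biUnion fun w ↦ G.neighborFinset w := by
      intro u hu
      obtain ⟨w, hadj, hw⟩ := exists_adj_dist_eq_of_dist_eq_succ (mem_filter.mp hu).2
      exact mem_biUnion.mpr ⟨w, by simpa using hw, (G.mem_neighborFinset w u).mpr hadj.symm⟩
    calc #{u | G.dist u v = n + 1}
        ≤ ∑ w ∈ ({w | G.dist w v = n} : Finset V), #(G.neighborFinset w) :=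
          (card_le_card hsub).trans card_biUnion_le
      _ ≤ ∑ _w ∈ ({w | G.dist w v = n} : Finset V), Δ := sum_le_sum fun w _ ↦ hdeg w
      _ = #{w | G.dist w v = n} * Δ := sum_const_nat fun _ _ ↦ rfl
      _ ≤ Δ ^ n * Δ := Nat.mul_le_mul_right Δ ih
      _ = Δ ^ (n + 1) := (pow_succ Δ n).symm

lemma exists_le_dist_of_sum_pow_lt_card (hconn : G.Preconnected) {Δ : ℕ}
    (hdeg : ∀ w, G.degree w ≤ Δ) (v : V) {r : ℕ}
    (hcard : ∑ i ∈ range r, Δ ^ i < Fintype.card V) :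
    ∃ u, r ≤ G.dist u v := by
  by_contra! hclose
  refine hcard.not_ge ?_
  calc Fintype.card V = ∑ i ∈ range r, #{u | G.dist u v = i} :=
        card_eq_sum_card_fiberwise fun u _ ↦ mem_range.mpr (hclose u)
    _ ≤ ∑ i ∈ range r, Δ ^ i :=
        sum_le_sum fun i _ ↦ card_filter_dist_eq_le_pow hconn hdeg v i

end SimpleGraph

theorem stmt_0 {V : Type*} [Fintype V] (G : SimpleGraph V) [DecidableRel G.Adj]
    (ℓ : ℕ) (hℓ : 0 < ℓ) (hconn : G.Connected)
    (hcard : 3 ^ ℓ - 1 ≤ 2 * Fintype.card V)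
    (hdeg : ∀ v : V, G.degree v ≤ 3) (v : V) :
    ∃ p : Fin ℓ → V, Function.Injective p ∧ p ⟨0, hℓ⟩ = v ∧
      ∀ i : Fin ℓ, ∀ h : (i : ℕ) + 1 < ℓ, G.Adj (p i) (p ⟨i + 1, h⟩) := by
  have hgeom : (∑ i ∈ Finset.range (ℓ - 1), 3 ^ i) * 2 + 1 = 3 ^ (ℓ - 1) :=
    geom_sum_mul_add 2 _
  have hpow : 3 ^ ℓ = 3 * 3 ^ (ℓ - 1) := by rw [← pow_succ', Nat.sub_add_cancel hℓ]
  obtain ⟨u, hu⟩ := SimpleGraph.exists_le_dist_of_sum_pow_lt_card hconn.preconnected hdeg v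
    (r := ℓ - 1) (by omega)
  obtain ⟨p, hp, hplen⟩ := hconn.exists_path_of_dist v u
  exact hp.exists_injective_chain hℓ (by rw [hplen, SimpleGraph.dist_comm]; omega)
end

section
/- Every infinite set of monomial ideals in the polynomial ring k[x₁,…,x_n] contains two distinct ideals I and J with I ⊆ J (Maclagan's theorem: antichains of monomial ideals under inclusion are finite). -/
/-- An ideal of `k[x₁,…,xₙ]` is a monomial ideal if it is generated by monomials. -/
def IsMonomialIdeal {k : Type*} [Field k] {n : ℕ}
    (I : Ideal (MvPolynomial (Fin n) k)) : Prop :=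
  ∃ S : Set (Fin n → ℕ),
    I = Ideal.span ((fun a => MvPolynomial.monomial (Finsupp.equivFunOnFinite.symm a) (1 : k)) '' S)

/-!
A monomial ideal is determined by its set of exponents, an upper set of `ℕⁿ`, so it suffices that
the upper sets of `ℕⁿ`, ordered by reverse inclusion, are well-quasi-ordered. By induction on `n`,
view an upper set `U` of `ℕ × α` as the sequence of its slices `Uₜ = {a | (t, a) ∈ U}`, which
increases with `t`. Well-quasi-ordering of the upper sets of `α` forbids infinite strictly
increasing chains, so the slices are constant from some `N` on, and `U` is encoded by the stable
slice `U_N` together with the list `[U₀, …, U_N]`. Higman's lemma makes these pairs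
well-quasi-ordered, and a comparison of the codes compares the upper sets slice by slice.
-/

theorem List.SublistForall₂.exists_le_getElem {α β : Type*} {R : α → β → Prop}
    {l₁ : List α} {l₂ : List β} (h : List.SublistForall₂ R l₁ l₂) :
    ∀ i (hi : i < l₁.length), ∃ j, ∃ hj : j < l₂.length, i ≤ j ∧ R l₁[i] l₂[j] := by
  induction h with
  | nil => simp
  | cons hab _ ih =>
    rintro (_ | i) hi
    · exact ⟨0, by simp, le_rfl, hab⟩
    · obtain ⟨j, hj, hij, hr⟩ := ih i (by simpa using hi)
      exact ⟨j + 1, by simpa using hj, by omega, hr⟩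
  | cons_right _ ih =>
    intro i hi
    obtain ⟨j, hj, hij, hr⟩ := ih i hi
    exact ⟨j + 1, by simpa using hj, by omega, hr⟩

theorem WellQuasiOrdered.sublistForall₂ {α : Type*} {r : α → α → Prop} [IsPreorder α r]
    (h : WellQuasiOrdered r) : WellQuasiOrdered (List.SublistForall₂ r) := by
  rw [← Set.partiallyWellOrderedOn_univ_iff] at h ⊢
  simpa using h.partiallyWellOrderedOn_sublistForall₂ r

namespace UpperSet

variable {α β : Type*} [Preorder α] [Preorder β]

instance [Finite α] : Finite (UpperSet α) :=
  Finite.of_injective _ SetLike.coe_injective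

def slice (U : UpperSet (β × α)) (b : β) : UpperSet α where
  carrier := {a | (b, a) ∈ U}
  upper' _ _ hle ha := U.upper (Prod.mk_le_mk.2 ⟨le_rfl, hle⟩) ha

theorem slice_antitone (U : UpperSet (β × α)) : Antitone U.slice :=
  fun _ _ hb _ ha => U.upper (Prod.mk_le_mk.2 ⟨hb, le_rfl⟩) ha

theorem le_of_forall_slice_le {U V : UpperSet (β × α)} (h : ∀ b, U.slice b ≤ V.slice b) :
    U ≤ V :=
  fun x hx => h x.1 hx

theorem exists_stable_slice (U : UpperSet (ℕ × α)) [WellFoundedLT (UpperSet α)] :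
    ∃ N, (∀ t, N ≤ t → U.slice t = U.slice N) ∧ ∀ t, U.slice N ≤ U.slice t := by
  obtain ⟨N, hN⟩ := WellFoundedLT.antitone_chain_condition U.slice_antitone
  refine ⟨N, fun t ht => (hN t ht).symm, fun t => ?_⟩
  calc U.slice N = U.slice (max N t) := hN _ (le_max_left N t)
    _ ≤ U.slice t := U.slice_antitone (le_max_right N t)

theorem wellQuasiOrderedLE_nat_prod [WellQuasiOrderedLE (UpperSet α)] :
    WellQuasiOrderedLE (UpperSet (ℕ × α)) := by
  refine ⟨fun U => ?_⟩
  choose N hN hNle using fun i => (U i).exists_stable_slice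
  let L i := (List.range (N i + 1)).map (U i).slice
  obtain ⟨m, k, hmk, hlim, hlist⟩ := wellQuasiOrdered_le.prod wellQuasiOrdered_le.sublistForall₂
    fun i => ((U i).slice (N i), L i)
  refine ⟨m, k, hmk, le_of_forall_slice_le fun t => ?_⟩
  rcases le_or_gt t (N m) with ht | ht
  · obtain ⟨j, hj, htj, hle⟩ := hlist.exists_le_getElem t (by simp [L]; omega)
    simp only [L, List.getElem_map, List.getElem_range] at hle
    exact hle.trans ((U k).slice_antitone htj)
  · calc (U m).slice t = (U m).slice (N m) := hN m t ht.le
      _ ≤ (U k).slice (N k) := hlim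
      _ ≤ (U k).slice t := hNle k t

instance wellQuasiOrderedLE_fin_nat (n : ℕ) : WellQuasiOrderedLE (UpperSet (Fin n → ℕ)) := by
  induction n with
  | zero => exact Finite.to_wellQuasiOrderedLE
  | succ n ih =>
    exact (map (Fin.consOrderIso fun _ => ℕ)).wellQuasiOrderedLE_iff.mp wellQuasiOrderedLE_nat_prod

instance wellQuasiOrderedLE_fin_finsupp_nat (n : ℕ) : WellQuasiOrderedLE (UpperSet (Fin n →₀ ℕ)) :=
  (map Finsupp.orderIsoFunOnFinite).wellQuasiOrderedLE_iff.mpr inferInstance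

end UpperSet

namespace MvPolynomial

variable {σ R : Type*} [CommSemiring R]

def monomialExponents (I : Ideal (MvPolynomial σ R)) : UpperSet (σ →₀ ℕ) where
  carrier := {a | monomial a 1 ∈ I}
  upper' a b hab ha := by
    have hb : monomial b (1 : R) = monomial (b - a) 1 * monomial a 1 := by
      rw [monomial_mul, one_mul, tsub_add_cancel_of_le hab]
    change monomial b 1 ∈ I
    exact hb ▸ I.mul_mem_left _ ha

theorem span_monomial_le_iff {S : Set (σ →₀ ℕ)} {J : Ideal (MvPolynomial σ R)} :
    Ideal.span ((fun a => monomial a (1 : R)) '' S) ≤ J ↔ S ⊆ monomialExponents J := by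
  rw [Ideal.span_le, Set.image_subset_iff]
  rfl

theorem span_monomial_le_of_monomialExponents_le {S : Set (σ →₀ ℕ)} {J : Ideal (MvPolynomial σ R)}
    (h : monomialExponents J ≤ monomialExponents (Ideal.span ((fun a => monomial a (1 : R)) '' S))) :
    Ideal.span ((fun a => monomial a (1 : R)) '' S) ≤ J :=
  span_monomial_le_iff.2 <| (span_monomial_le_iff.1 le_rfl).trans (UpperSet.coe_subset_coe.2 h)

end MvPolynomial

open MvPolynomial in
theorem IsMonomialIdeal.le_of_monomialExponents_le {k : Type*} [Field k] {n : ℕ}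
    {I J : Ideal (MvPolynomial (Fin n) k)} (hI : IsMonomialIdeal I)
    (h : monomialExponents J ≤ monomialExponents I) : I ≤ J := by
  obtain ⟨S, rfl⟩ := hI
  rw [← Set.image_image (fun a => monomial a (1 : k))] at h ⊢
  exact span_monomial_le_of_monomialExponents_le h

theorem stmt_10_general {k : Type*} [Field k] (n : ℕ)
    (𝒰 : Set (Ideal (MvPolynomial (Fin n) k))) (hinf : 𝒰.Infinite)
    (hmono : ∀ I ∈ 𝒰, IsMonomialIdeal I) :
    ∃ I ∈ 𝒰, ∃ J ∈ 𝒰, I ≠ J ∧ I ≤ J := by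
  let g := hinf.natEmbedding 𝒰
  obtain ⟨i, j, hij, hle⟩ := wellQuasiOrdered_le fun t => MvPolynomial.monomialExponents (g t).1
  exact ⟨g j, (g j).2, g i, (g i).2, fun h => hij.ne' (g.injective (Subtype.ext h)),
    (hmono _ (g j).2).le_of_monomialExponents_le hle⟩

theorem stmt_10 {k : Type*} [Field k] (n : ℕ) (hn : 0 < n)
    (𝒰 : Set (Ideal (MvPolynomial (Fin n) k))) (hinf : 𝒰.Infinite)
    (hmono : ∀ I ∈ 𝒰, IsMonomialIdeal I) :
    ∃ I ∈ 𝒰, ∃ J ∈ 𝒰, I ≠ J ∧ I ≤ J :=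
  stmt_10_general n 𝒰 hinf hmono
end
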